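/- arXiv:2106.07900 — 10 statements merged into one kernel-verified Lean document; each statement's English description precedes it below -/
import Mathlib

section
/- Let v₁ and v₂ be nonzero vectors in the Euclidean space ℝ^d that are linearly independent (not parallel), and let β > 0. Suppose u* is a nonzero vector satisfying the stationary equation u* = v₁ − (β/‖u*‖₂)·v₂. If u = v₁ − h·v₂ for some real h (so that in particular u ≠ 0), and u' = v₁ − (β/‖u‖₂)·v₂, then ‖u' − u*‖₂ ≤ (β·‖v₂‖₂ / (‖v₁‖₂² − ⟨v₁, v₂/‖v₂‖₂⟩²)) · ‖u − u*‖₂, where the denominator ‖v₁‖₂² − ⟨v₁, v₂/‖v₂‖₂⟩² is strictly positive. -/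
open scoped RealInnerProductSpace

/-- Theorem 2 of the paper: one step of the iterative rule
`u ↦ v₁ - (β/‖u‖)•v₂` contracts linearly towards the stationary point `u*`. -/
theorem atd_iterative_rule_linear_convergence
    {d : ℕ} (v₁ v₂ : EuclideanSpace ℝ (Fin d))
    (hv₁ : v₁ ≠ 0) (hv₂ : v₂ ≠ 0)
    (hind : LinearIndependent ℝ ![v₁, v₂])
    (β : ℝ) (hβ : 0 < β)
    (ustar : EuclideanSpace ℝ (Fin d)) (hustar : ustar ≠ 0)
    (hstat : ustar = v₁ - (β / ‖ustar‖) • v₂)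
    (u : EuclideanSpace ℝ (Fin d)) (h : ℝ) (hu : u = v₁ - h • v₂)
    (u' : EuclideanSpace ℝ (Fin d)) (hu' : u' = v₁ - (β / ‖u‖) • v₂) :
    0 < ‖v₁‖ ^ 2 - ⟪v₁, ‖v₂‖⁻¹ • v₂⟫ ^ 2 ∧
      ‖u' - ustar‖ ≤
        (β * ‖v₂‖ / (‖v₁‖ ^ 2 - ⟪v₁, ‖v₂‖⁻¹ • v₂⟫ ^ 2)) * ‖u - ustar‖ := by
  have hv₂n : (0:ℝ) < ‖v₂‖ := norm_pos_iff.mpr hv₂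
  set t : ℝ := ⟪v₁, v₂⟫ with ht
  set D : ℝ := ‖v₁‖^2 - t^2/‖v₂‖^2 with hD
  have hDeq : ‖v₁‖ ^ 2 - ⟪v₁, ‖v₂‖⁻¹ • v₂⟫ ^ 2 = D := by
    rw [real_inner_smul_right, ← ht, hD, mul_pow, inv_pow,
      div_eq_mul_inv, mul_comm (t^2)]
  have key : ∀ a : ℝ, ‖v₁ - a • v₂‖^2 = D + (a*‖v₂‖ - t/‖v₂‖)^2 := by
    intro a
    rw [norm_sub_sq_real, real_inner_smul_right, norm_smul, mul_pow,
      Real.norm_eq_abs, sq_abs, ← ht, hD]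
    field_simp
    ring
  have hnotpar : ∀ a : ℝ, v₁ ≠ a • v₂ := by
    intro a ha
    rcases linearIndependent_fin2.mp hind with ⟨h2, h3⟩
    simp only [Matrix.cons_val_zero, Matrix.cons_val_one, Matrix.head_cons] at h2 h3
    exact h3 a ha.symm
  have hDpos : 0 < D := by
    have h0 := key (t/‖v₂‖^2)
    have hz : (t/‖v₂‖^2)*‖v₂‖ - t/‖v₂‖ = 0 := by
      field_simp
      ring
    rw [hz] at h0
    norm_num at h0
    have hne : v₁ - (t/‖v₂‖^2) • v₂ ≠ 0 := by
      intro hc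
      exact hnotpar (t/‖v₂‖^2) (by rwa [sub_eq_zero] at hc)
    have hpos := norm_pos_iff.mpr hne
    exact h0 ▸ pow_pos hpos 2
  refine ⟨by rw [hDeq]; exact hDpos, ?_⟩
  have hu2 : D ≤ ‖u‖^2 := by
    rw [hu, key h]; nlinarith [sq_nonneg (h*‖v₂‖ - t/‖v₂‖)]
  have hus2 : D ≤ ‖ustar‖^2 := by
    have hk := key (β/‖ustar‖)
    rw [← hstat] at hk
    rw [hk]
    nlinarith [sq_nonneg ((β/‖ustar‖)*‖v₂‖ - t/‖v₂‖)]
  have hun : (0:ℝ) < ‖u‖ := by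
    rcases (norm_nonneg u).lt_or_eq with h1 | h1
    · exact h1
    · exfalso; nlinarith
  have husn : (0:ℝ) < ‖ustar‖ := norm_pos_iff.mpr hustar
  have hprod : D ≤ ‖u‖ * ‖ustar‖ := by
    nlinarith [mul_le_mul hu2 hus2 hDpos.le (sq_nonneg ‖u‖),
      sq_nonneg (‖u‖*‖ustar‖ - D), sq_nonneg (‖u‖*‖ustar‖ + D)]
  have hdiff : u' - ustar = ((β/‖ustar‖) - (β/‖u‖)) • v₂ := by
    rw [hu']
    nth_rewrite 1 [hstat]
    module
  have hnormdiff : ‖u' - ustar‖ = |β/‖ustar‖ - β/‖u‖| * ‖v₂‖ := by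
    rw [hdiff, norm_smul, Real.norm_eq_abs]
  have habs : |β/‖ustar‖ - β/‖u‖| = β * |‖u‖ - ‖ustar‖| / (‖u‖ * ‖ustar‖) := by
    rw [div_sub_div _ _ husn.ne' hun.ne', abs_div,
      abs_of_pos (by positivity : (0:ℝ) < ‖ustar‖*‖u‖),
      show β*‖u‖ - ‖ustar‖*β = β*(‖u‖ - ‖ustar‖) by ring, abs_mul, abs_of_pos hβ]
    ring
  have hlip : |‖u‖ - ‖ustar‖| ≤ ‖u - ustar‖ := abs_norm_sub_norm_le u ustar
  rw [hnormdiff, habs, hDeq]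
  have h1 : β * |‖u‖ - ‖ustar‖| / (‖u‖ * ‖ustar‖) * ‖v₂‖
      ≤ β * ‖u - ustar‖ / (‖u‖ * ‖ustar‖) * ‖v₂‖ := by gcongr
  refine h1.trans ?_
  have h2 : β * ‖u - ustar‖ * ‖v₂‖ / (‖u‖*‖ustar‖) ≤ β * ‖u - ustar‖ * ‖v₂‖ / D := by
    apply div_le_div_of_nonneg_left (by positivity) hDpos hprod
  calc β * ‖u - ustar‖ / (‖u‖ * ‖ustar‖) * ‖v₂‖
      = β * ‖u - ustar‖ * ‖v₂‖ / (‖u‖*‖ustar‖) := by ring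
    _ ≤ β * ‖u - ustar‖ * ‖v₂‖ / D := h2
    _ = β * ‖v₂‖ / D * ‖u - ustar‖ := by ring
end

section
/- Let v₁ and v₂ be vectors in the Euclidean space ℝ^d and let β > 0. Suppose u and u* are nonzero vectors, u' = v₁ − (β/‖u‖₂)·v₂, and u* = v₁ − (β/‖u*‖₂)·v₂. Then ‖u' − u*‖₂ ≤ (β·‖v₂‖₂ / (‖u‖₂·‖u*‖₂)) · ‖u − u*‖₂. -/
/-- The key pointwise step in the proof of Theorem 2 of the paper:
if `u' = v₁ - (β/‖u‖)•v₂` and `u* = v₁ - (β/‖u*‖)•v₂`, then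
`‖u' - u*‖ ≤ (β‖v₂‖/(‖u‖‖u*‖)) · ‖u - u*‖`. -/
theorem atd_iterative_rule_pointwise_contraction
    {d : ℕ} (v₁ v₂ : EuclideanSpace ℝ (Fin d))
    (β : ℝ) (hβ : 0 < β)
    (u ustar : EuclideanSpace ℝ (Fin d)) (hu : u ≠ 0) (hustar : ustar ≠ 0)
    (u' : EuclideanSpace ℝ (Fin d))
    (hu' : u' = v₁ - (β / ‖u‖) • v₂)
    (hstat : ustar = v₁ - (β / ‖ustar‖) • v₂) :
    ‖u' - ustar‖ ≤ (β * ‖v₂‖ / (‖u‖ * ‖ustar‖)) * ‖u - ustar‖ := by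
  have hun : (0:ℝ) < ‖u‖ := norm_pos_iff.mpr hu
  have hsn : (0:ℝ) < ‖ustar‖ := norm_pos_iff.mpr hustar
  have key : u' - ustar = (β / ‖ustar‖ - β / ‖u‖) • v₂ := by
    conv_lhs => rw [hu', hstat]
    rw [sub_smul]
    abel
  have h1 : ‖u' - ustar‖ = |β / ‖ustar‖ - β / ‖u‖| * ‖v₂‖ := by
    rw [key, norm_smul, Real.norm_eq_abs]
  have h2 : β / ‖ustar‖ - β / ‖u‖ = β * (‖u‖ - ‖ustar‖) / (‖u‖ * ‖ustar‖) := by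
    field_simp
  have h3 : |‖u‖ - ‖ustar‖| ≤ ‖u - ustar‖ := abs_norm_sub_norm_le u ustar
  rw [h1, h2, abs_div, abs_mul, abs_of_pos hβ, abs_of_pos (mul_pos hun hsn)]
  rw [div_mul_eq_mul_div, div_mul_eq_mul_div, div_le_div_iff₀ (mul_pos hun hsn) (mul_pos hun hsn)]
  have hb : (0:ℝ) ≤ β * ‖v₂‖ := by positivity
  have h4 := mul_le_mul_of_nonneg_left h3 hb
  nlinarith [mul_pos hun hsn, mul_le_mul_of_nonneg_right h4 (le_of_lt (mul_pos hun hsn))]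
end

section
/- Let γ ≥ 0 be real, let N ≥ 2 be a natural number, let δ ∈ (0,1), and let D₁, D₂ ≥ 0 with D₁ > 0 or D₂ > 0. On a probability space, let (Y_i) for i = 1,…,N² be independent real random variables such that each of the first N(N−1) variables almost surely takes values in a closed interval of length at most (γ+1)·D₂/(N(N−1)), and each of the remaining N variables almost surely takes values in a closed interval of length at most D₁/N. Let S = Σ_{i=1}^{N²} Y_i. Then P(|S − E[S]| ≥ √(D₁² + (γ+1)²·D₂²/(N−1)) · √(log(2/δ)/(2N))) ≤ δ. -/
/-!
By Hoeffding's lemma each centred summand `Y i - 𝔼[Y i]` is sub-Gaussian with variance proxy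
`(b i - a i)² / 4`, and for independent summands the proxies add up. The squared ranges sum to at
most `N(N-1) · ((γ+1)D₂ / (N(N-1)))² + N · (D₁/N)² = A / N` with `A = D₁² + (γ+1)²D₂² / (N-1)`, so
the Chernoff bound on both tails gives `P(|S - 𝔼S| ≥ t) ≤ 2 exp(-2Nt² / A)`, which is `δ` for the
stated `t`.
-/

open MeasureTheory ProbabilityTheory Real Finset
open scoped NNReal

namespace ProbabilityTheory.HasSubgaussianMGF

variable {Ω : Type*} [MeasurableSpace Ω] {μ : Measure Ω} {X : Ω → ℝ} {c c' : ℝ≥0}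

lemma mono (h : HasSubgaussianMGF X c μ) (hc : c ≤ c') : HasSubgaussianMGF X c' μ where
  integrable_exp_mul := h.integrable_exp_mul
  mgf_le t := (h.mgf_le t).trans (exp_le_exp.2 (by gcongr))

lemma measureReal_abs_ge_le [IsFiniteMeasure μ] (h : HasSubgaussianMGF X c μ) {ε : ℝ}
    (hε : 0 ≤ ε) : μ.real {ω | ε ≤ |X ω|} ≤ 2 * exp (-ε ^ 2 / (2 * c)) :=
  calc μ.real {ω | ε ≤ |X ω|} ≤ μ.real ({ω | ε ≤ X ω} ∪ {ω | ε ≤ (-X) ω}) :=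
        measureReal_mono fun ω (hω : ε ≤ |X ω|) ↦ le_abs.1 hω
    _ ≤ μ.real {ω | ε ≤ X ω} + μ.real {ω | ε ≤ (-X) ω} := measureReal_union_le _ _
    _ ≤ exp (-ε ^ 2 / (2 * c)) + exp (-ε ^ 2 / (2 * c)) :=
        add_le_add (h.measure_ge_le hε) (h.neg.measure_ge_le hε)
    _ = 2 * exp (-ε ^ 2 / (2 * c)) := by ring

end ProbabilityTheory.HasSubgaussianMGF

theorem Fin.sum_le_of_forall_lt_le_of_forall_ge_le {n k : ℕ} (hk : k ≤ n) {f : Fin n → ℝ}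
    {u v : ℝ}
    (hu : ∀ i : Fin n, (i : ℕ) < k → f i ≤ u) (hv : ∀ i : Fin n, k ≤ (i : ℕ) → f i ≤ v) :
    ∑ i, f i ≤ k * u + (n - k : ℕ) * v := by
  have hcard : #{i : Fin n | (i : ℕ) < k} = k := by simp [Fin.card_filter_val_lt, hk]
  have hcard' : #{i : Fin n | ¬ (i : ℕ) < k} = n - k := by
    rw [filter_not, card_sdiff_of_subset (filter_subset _ _), hcard, card_univ, Fintype.card_fin]
  rw [← sum_filter_add_sum_filter_not univ (fun i : Fin n ↦ (i : ℕ) < k)]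
  gcongr
  · have := sum_le_card_nsmul {i : Fin n | (i : ℕ) < k} f u fun i hi ↦ hu i (mem_filter.1 hi).2
    rwa [hcard, nsmul_eq_mul] at this
  · have := sum_le_card_nsmul {i : Fin n | ¬ (i : ℕ) < k} f v
      fun i hi ↦ hv i (not_lt.1 (mem_filter.1 hi).2)
    rwa [hcard', nsmul_eq_mul] at this

section Hoeffding

variable {Ω ι : Type*} [MeasurableSpace Ω] {μ : Measure Ω} [IsProbabilityMeasure μ] [Fintype ι]
  {X : ι → Ω → ℝ} {a b : ι → ℝ}

theorem hasSubgaussianMGF_sum_sub_integral (hX : ∀ i, AEMeasurable (X i) μ)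
    (hindep : iIndepFun X μ) (hab : ∀ i, ∀ᵐ ω ∂μ, X i ω ∈ Set.Icc (a i) (b i)) :
    HasSubgaussianMGF (fun ω ↦ ∑ i, X i ω - ∫ ω', ∑ i, X i ω' ∂μ)
      (∑ i, (‖b i - a i‖₊ / 2) ^ 2) μ := by
  have hcentered := HasSubgaussianMGF.sum_of_iIndepFun (s := univ)
    (hindep.comp (fun i (x : ℝ) ↦ x - ∫ ω, X i ω ∂μ) fun _ ↦ measurable_id.sub_const _)
    fun i _ ↦ hasSubgaussianMGF_of_mem_Icc (hX i) (hab i)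
  convert hcentered using 2 with ω
  rw [integral_finsetSum _ fun i _ ↦ Integrable.of_mem_Icc _ _ (hX i) (hab i),
    ← sum_sub_distrib]
  rfl

theorem measureReal_abs_sum_sub_integral_ge_le (hX : ∀ i, AEMeasurable (X i) μ)
    (hindep : iIndepFun X μ) (hab : ∀ i, ∀ᵐ ω ∂μ, X i ω ∈ Set.Icc (a i) (b i)) {C : ℝ}
    (hC : ∑ i, (b i - a i) ^ 2 ≤ C) {ε : ℝ} (hε : 0 ≤ ε) :
    μ.real {ω | ε ≤ |∑ i, X i ω - ∫ ω', ∑ i, X i ω' ∂μ|} ≤ 2 * exp (-2 * ε ^ 2 / C) := by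
  have hC0 : 0 ≤ C := (sum_nonneg fun i _ ↦ sq_nonneg (b i - a i)).trans hC
  have hC' : (∑ i, (‖b i - a i‖₊ / 2) ^ 2 : ℝ≥0) ≤ (C / 4).toNNReal := by
    rw [← NNReal.coe_le_coe, Real.coe_toNNReal _ (by positivity)]
    push_cast
    simp only [Real.norm_eq_abs, div_pow, sq_abs, ← sum_div]
    linarith
  convert ((hasSubgaussianMGF_sum_sub_integral hX hindep hab).mono hC').measureReal_abs_ge_le hε
    using 3
  rw [Real.coe_toNNReal _ (by positivity)]
  ring

end Hoeffding

theorem sum_sq_le_of_cross_le_of_matched_le {N : ℕ} (hN : 2 ≤ N) {r : Fin (N ^ 2) → ℝ}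
    (hr : ∀ i, 0 ≤ r i) {c d : ℝ}
    (hcross : ∀ i : Fin (N ^ 2), (i : ℕ) < N * (N - 1) → r i ≤ c / ((N : ℝ) * ((N : ℝ) - 1)))
    (hmatched : ∀ i : Fin (N ^ 2), N * (N - 1) ≤ (i : ℕ) → r i ≤ d / (N : ℝ)) :
    ∑ i, r i ^ 2 ≤ (d ^ 2 + c ^ 2 / ((N : ℝ) - 1)) / N := by
  refine (Fin.sum_le_of_forall_lt_le_of_forall_ge_le (k := N * (N - 1)) ?_
    (fun i hi ↦ pow_le_pow_left₀ (hr i) (hcross i hi) 2)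
    (fun i hi ↦ pow_le_pow_left₀ (hr i) (hmatched i hi) 2)).trans_eq ?_
  · rw [sq]
    exact Nat.mul_le_mul_left N (Nat.sub_le N 1)
  · have hcount : N ^ 2 - N * (N - 1) = N := by
      obtain ⟨n, rfl⟩ : ∃ n, N = n + 1 := ⟨N - 1, by omega⟩
      exact Nat.sub_eq_of_eq_add (by rw [Nat.add_sub_cancel]; ring)
    have hN1 : (N : ℝ) - 1 ≠ 0 := by
      rw [sub_ne_zero, Nat.cast_ne_one]
      omega
    rw [hcount, Nat.cast_mul, Nat.cast_sub (by omega), Nat.cast_one]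
    field_simp
    ring

theorem two_mul_exp_neg_two_mul_sq_div_eq {A n δ : ℝ} (hA : 0 < A) (hn : 0 < n) (hδ : 0 < δ)
    (hδ2 : δ ≤ 2) : 2 * exp (-2 * (√A * √(log (2 / δ) / (2 * n))) ^ 2 / (A / n)) = δ := by
  have hlog : 0 ≤ log (2 / δ) := log_nonneg ((one_le_div hδ).2 hδ2)
  rw [mul_pow, sq_sqrt hA.le, sq_sqrt (by positivity)]
  rw [show -2 * (A * (log (2 / δ) / (2 * n))) / (A / n) = -log (2 / δ) by field_simp,
    exp_neg, exp_log (by positivity)]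
  field_simp

theorem atd_self_supervised_loss_concentration_sharp_general
    {Ω : Type*} [MeasurableSpace Ω] (μ : Measure Ω) [IsProbabilityMeasure μ]
    (γ : ℝ) (hγ : 0 ≤ γ) (N : ℕ) (hN : 2 ≤ N)
    (δ : ℝ) (hδ : δ ∈ Set.Ioo (0 : ℝ) 1)
    (D₁ D₂ : ℝ) (hpos : 0 < D₁ ∨ 0 < D₂)
    (Y : Fin (N ^ 2) → Ω → ℝ) (hmeas : ∀ i, Measurable (Y i))
    (hindep : iIndepFun Y μ)
    (a b : Fin (N ^ 2) → ℝ)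
    (hab : ∀ i, ∀ᵐ ω ∂μ, Y i ω ∈ Set.Icc (a i) (b i))
    (hlen₁ : ∀ i : Fin (N ^ 2), (i : ℕ) < N * (N - 1) →
      b i - a i ≤ (γ + 1) * D₂ / ((N : ℝ) * ((N : ℝ) - 1)))
    (hlen₂ : ∀ i : Fin (N ^ 2), N * (N - 1) ≤ (i : ℕ) →
      b i - a i ≤ D₁ / (N : ℝ)) :
    μ {ω | Real.sqrt (D₁ ^ 2 + (γ + 1) ^ 2 * D₂ ^ 2 / ((N : ℝ) - 1)) *
            Real.sqrt (Real.log (2 / δ) / (2 * (N : ℝ)))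
          ≤ |(∑ i, Y i ω) - ∫ ω', (∑ i, Y i ω') ∂μ|}
      ≤ ENNReal.ofReal δ := by
  obtain ⟨hδ0, hδ1⟩ := hδ
  have hN1 : 0 < (N : ℝ) - 1 := by
    have : (2 : ℝ) ≤ N := by exact_mod_cast hN
    linarith
  have hA : 0 < D₁ ^ 2 + (γ + 1) ^ 2 * D₂ ^ 2 / ((N : ℝ) - 1) := by
    rcases hpos with h | h
    · exact add_pos_of_pos_of_nonneg (by positivity) (div_nonneg (by positivity) hN1.le)
    · exact add_pos_of_nonneg_of_pos (sq_nonneg _) (div_pos (by positivity) hN1)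
  have hrange : ∀ i, 0 ≤ b i - a i := fun i ↦
    let ⟨_, hω⟩ := (hab i).exists
    sub_nonneg.2 (hω.1.trans hω.2)
  have hsum := sum_sq_le_of_cross_le_of_matched_le hN hrange hlen₁ hlen₂
  rw [mul_pow] at hsum
  rw [ENNReal.le_ofReal_iff_toReal_le (measure_ne_top _ _) hδ0.le]
  exact (measureReal_abs_sum_sub_integral_ge_le (fun i ↦ (hmeas i).aemeasurable) hindep hab hsum
    (by positivity)).trans_eq
    (two_mul_exp_neg_two_mul_sq_div_eq hA (by positivity) hδ0 (by linarith))

/-- The sharper intermediate concentration bound in the proof of Theorem 1 of the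
paper, with `D₁` the range of the `N` matched-pair summands and `D₂` the range of
the `N(N-1)` cross-pair summands. -/
theorem atd_self_supervised_loss_concentration_sharp
    {Ω : Type*} [MeasurableSpace Ω] (μ : Measure Ω) [IsProbabilityMeasure μ]
    (γ : ℝ) (hγ : 0 ≤ γ) (N : ℕ) (hN : 2 ≤ N)
    (δ : ℝ) (hδ : δ ∈ Set.Ioo (0 : ℝ) 1)
    (D₁ D₂ : ℝ) (hD₁ : 0 ≤ D₁) (hD₂ : 0 ≤ D₂) (hpos : 0 < D₁ ∨ 0 < D₂)
    (Y : Fin (N ^ 2) → Ω → ℝ) (hmeas : ∀ i, Measurable (Y i))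
    (hindep : iIndepFun Y μ)
    (a b : Fin (N ^ 2) → ℝ)
    (hab : ∀ i, ∀ᵐ ω ∂μ, Y i ω ∈ Set.Icc (a i) (b i))
    (hlen₁ : ∀ i : Fin (N ^ 2), (i : ℕ) < N * (N - 1) →
      b i - a i ≤ (γ + 1) * D₂ / ((N : ℝ) * ((N : ℝ) - 1)))
    (hlen₂ : ∀ i : Fin (N ^ 2), N * (N - 1) ≤ (i : ℕ) →
      b i - a i ≤ D₁ / (N : ℝ)) :
    μ {ω | Real.sqrt (D₁ ^ 2 + (γ + 1) ^ 2 * D₂ ^ 2 / ((N : ℝ) - 1)) *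
            Real.sqrt (Real.log (2 / δ) / (2 * (N : ℝ)))
          ≤ |(∑ i, Y i ω) - ∫ ω', (∑ i, Y i ω') ∂μ|}
      ≤ ENNReal.ofReal δ :=
  atd_self_supervised_loss_concentration_sharp_general μ γ hγ N hN δ hδ D₁ D₂ hpos Y hmeas hindep a
    b hab hlen₁ hlen₂
end

section
/- Let N ≥ 2 and R ≥ 1 be natural numbers, let γ be a real number, and let X and X̃ be real N×R matrices all of whose rows x⁽¹⁾,…,x⁽ᴺ⁾ and x̃⁽¹⁾,…,x̃⁽ᴺ⁾ are nonzero. Then ((γ+1)/(N(N−1))) · Σ_{n ≠ s} ⟨x⁽ⁿ⁾/‖x⁽ⁿ⁾‖₂, x̃⁽ˢ⁾/‖x̃⁽ˢ⁾‖₂⟩ − (1/N) · Σ_{n=1}^{N} ⟨x⁽ⁿ⁾/‖x⁽ⁿ⁾‖₂, x̃⁽ⁿ⁾/‖x̃⁽ⁿ⁾‖₂⟩ = trace(Xᵀ · D(X) · G(γ) · D(X̃) · X̃). -/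
open Finset Matrix

/-- Euclidean norm of a row vector in `ℝ^R`. -/
noncomputable def rowNorm {R : ℕ} (v : Fin R → ℝ) : ℝ :=
  Real.sqrt (∑ r, v r ^ 2)

/-- `D(X)`: the `N × N` diagonal matrix whose `n`-th diagonal entry is the
reciprocal of the Euclidean norm of the `n`-th row of `X`. -/
noncomputable def Dmat {N R : ℕ} (X : Matrix (Fin N) (Fin R) ℝ) :
    Matrix (Fin N) (Fin N) ℝ :=
  Matrix.diagonal fun n => (rowNorm (X n))⁻¹

/-- `G(γ)`: the `N × N` matrix with diagonal entries `-1/N` and off-diagonal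
entries `(γ+1)/(N(N-1))`. -/
noncomputable def Gmat (N : ℕ) (γ : ℝ) : Matrix (Fin N) (Fin N) ℝ :=
  fun n s => if n = s then -(1 / (N : ℝ)) else (γ + 1) / ((N : ℝ) * ((N : ℝ) - 1))

/-- The trace-form identity for the empirical self-supervised loss
`L̃^Θ_ss(γ)` asserted in Section 3.2 of the paper. -/
theorem atd_empirical_loss_trace_form
    {N R : ℕ} (hN : 2 ≤ N) (hR : 1 ≤ R) (γ : ℝ)
    (X Xt : Matrix (Fin N) (Fin R) ℝ)
    (hX : ∀ n, X n ≠ 0) (hXt : ∀ n, Xt n ≠ 0) :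
    ((γ + 1) / ((N : ℝ) * ((N : ℝ) - 1))) *
        (∑ n, ∑ s ∈ Finset.univ.erase n,
          ∑ r, (X n r / rowNorm (X n)) * (Xt s r / rowNorm (Xt s)))
      - (1 / (N : ℝ)) *
        ∑ n, ∑ r, (X n r / rowNorm (X n)) * (Xt n r / rowNorm (Xt n))
      = Matrix.trace (Xᵀ * Dmat X * Gmat N γ * Dmat Xt * Xt) := by
  set Y := Dmat X * X with hY
  set Yt := Dmat Xt * Xt with hYt
  have hrw : Xᵀ * Dmat X * Gmat N γ * Dmat Xt * Xt = Yᵀ * Gmat N γ * Yt := by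
    rw [hY, hYt, Matrix.transpose_mul, Dmat, Matrix.diagonal_transpose, Matrix.mul_assoc]
  have hYapp : ∀ n r, Y n r = X n r / rowNorm (X n) := by
    intro n r
    simp [hY, Dmat, Matrix.diagonal_mul, div_eq_inv_mul]
  have hYtapp : ∀ n r, Yt n r = Xt n r / rowNorm (Xt n) := by
    intro n r
    simp [hYt, Dmat, Matrix.diagonal_mul, div_eq_inv_mul]
  have key : Matrix.trace (Yᵀ * Gmat N γ * Yt)
      = ∑ n, ∑ s, Gmat N γ n s * ∑ r, Y n r * Yt s r := by
    simp only [Matrix.trace, Matrix.diag_apply, Matrix.mul_apply, Matrix.transpose_apply,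
      Finset.sum_mul, Finset.mul_sum]
    rw [Finset.sum_comm]
    rw [Finset.sum_congr rfl fun s _ => Finset.sum_comm]
    rw [Finset.sum_comm]
    exact Finset.sum_congr rfl fun n _ => Finset.sum_congr rfl fun s _ =>
      Finset.sum_congr rfl fun r _ => by ring
  rw [hrw, key]
  have hsplit : ∀ n : Fin N, ∑ s, Gmat N γ n s * ∑ r, Y n r * Yt s r
      = ((γ + 1) / ((N : ℝ) * ((N : ℝ) - 1))) *
          (∑ s ∈ Finset.univ.erase n, ∑ r, Y n r * Yt s r)
        - (1 / (N : ℝ)) * ∑ r, Y n r * Yt n r := by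
    intro n
    rw [← Finset.add_sum_erase _ _ (Finset.mem_univ n)]
    have h1 : Gmat N γ n n = -(1 / (N : ℝ)) := by simp [Gmat]
    have h2 : ∀ s ∈ Finset.univ.erase n, Gmat N γ n s * ∑ r, Y n r * Yt s r
        = ((γ + 1) / ((N : ℝ) * ((N : ℝ) - 1))) * ∑ r, Y n r * Yt s r := by
      intro s hs
      rw [show Gmat N γ n s = (γ + 1) / ((N : ℝ) * ((N : ℝ) - 1)) from
        if_neg (Finset.ne_of_mem_erase hs).symm]
    rw [Finset.sum_congr rfl h2, h1, ← Finset.mul_sum]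
    ring
  rw [Finset.sum_congr rfl fun n _ => hsplit n, Finset.sum_sub_distrib,
    ← Finset.mul_sum, ← Finset.mul_sum]
  simp only [hYapp, hYtapp]
end

section
/- Let N, I, J, K, R be positive natural numbers with N ≥ 2, let T and T̃ be real arrays indexed by Fin N × Fin I × Fin J × Fin K, let X and X̃ be real N×R matrices all of whose rows are nonzero, let B be a real J×R matrix and C a real K×R matrix, and let α > 0, β ≥ 0, γ ≥ 0 be reals. For a real I×R matrix A define L(A) = Σ_{n,i,j,k} (T n i j k − Σ_r X n r · A i r · B j r · C k r)² + Σ_{n,i,j,k} (T̃ n i j k − Σ_r X̃ n r · A i r · B j r · C k r)² + α·(‖X‖_F² + ‖X̃‖_F² + ‖A‖_F² + ‖B‖_F² + ‖C‖_F²) + β·L̃^Θ_ss(γ), where L̃^Θ_ss(γ) = ((γ+1)/(N(N−1))) · Σ_{n ≠ s} ⟨x⁽ⁿ⁾/‖x⁽ⁿ⁾‖₂, x̃⁽ˢ⁾/‖x̃⁽ˢ⁾‖₂⟩ − (1/N) · Σ_{n=1}^{N} ⟨x⁽ⁿ⁾/‖x⁽ⁿ⁾‖₂, x̃⁽ⁿ⁾/‖x̃⁽ⁿ⁾‖₂⟩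 is computed from the rows of X and X̃ (and does not depend on A). If L(A) ≤ L(0), where 0 is the zero I×R matrix, then ‖A‖_F² ≤ (Σ_{n,i,j,k} (T n i j k)² + Σ_{n,i,j,k} (T̃ n i j k)² + 2β(γ+2)) / α. -/
open Finset

/-- The boundedness-of-factor-matrices claim of Appendix F of the paper:
if the objective value at `A` does not exceed its value at the zero matrix,
then `‖A‖_F² ≤ (‖T‖_F² + ‖T̃‖_F² + 2β(γ+2))/α`. -/
theorem atd_factor_matrix_bounded
    {N I J K R : ℕ} (hN : 2 ≤ N) (hI : 0 < I) (hJ : 0 < J) (hK : 0 < K) (hR : 0 < R)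
    (T Tt : Fin N → Fin I → Fin J → Fin K → ℝ)
    (X Xt : Matrix (Fin N) (Fin R) ℝ)
    (hX : ∀ n, X n ≠ 0) (hXt : ∀ n, Xt n ≠ 0)
    (B : Matrix (Fin J) (Fin R) ℝ) (C : Matrix (Fin K) (Fin R) ℝ)
    (α β γ : ℝ) (hα : 0 < α) (hβ : 0 ≤ β) (hγ : 0 ≤ γ)
    (L : Matrix (Fin I) (Fin R) ℝ → ℝ)
    (hL : ∀ A : Matrix (Fin I) (Fin R) ℝ, L A =
      (∑ n, ∑ i, ∑ j, ∑ k,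
          (T n i j k - ∑ r, X n r * A i r * B j r * C k r) ^ 2)
      + (∑ n, ∑ i, ∑ j, ∑ k,
          (Tt n i j k - ∑ r, Xt n r * A i r * B j r * C k r) ^ 2)
      + α * ((∑ n, ∑ r, (X n r) ^ 2) + (∑ n, ∑ r, (Xt n r) ^ 2)
             + (∑ i, ∑ r, (A i r) ^ 2) + (∑ j, ∑ r, (B j r) ^ 2)
             + (∑ k, ∑ r, (C k r) ^ 2))
      + β * (((γ + 1) / ((N : ℝ) * ((N : ℝ) - 1))) *
              (∑ n, ∑ s ∈ Finset.univ.erase n,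
                ∑ r, (X n r / rowNorm (X n)) * (Xt s r / rowNorm (Xt s)))
             - (1 / (N : ℝ)) *
              ∑ n, ∑ r, (X n r / rowNorm (X n)) * (Xt n r / rowNorm (Xt n))))
    (A : Matrix (Fin I) (Fin R) ℝ) (hopt : L A ≤ L 0) :
    (∑ i, ∑ r, (A i r) ^ 2)
      ≤ ((∑ n, ∑ i, ∑ j, ∑ k, (T n i j k) ^ 2)
          + (∑ n, ∑ i, ∑ j, ∑ k, (Tt n i j k) ^ 2)
          + 2 * β * (γ + 2)) / α := by
  have hA := hL A
  have h0 := hL 0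
  simp only [Matrix.zero_apply, mul_zero, zero_mul, Finset.sum_const_zero, sub_zero,
    ne_eq, OfNat.ofNat_ne_zero, not_false_eq_true, zero_pow, add_zero] at h0
  have hP : (0:ℝ) ≤ ∑ n, ∑ i, ∑ j, ∑ k,
      (T n i j k - ∑ r, X n r * A i r * B j r * C k r) ^ 2 := by positivity
  have hQ : (0:ℝ) ≤ ∑ n, ∑ i, ∑ j, ∑ k,
      (Tt n i j k - ∑ r, Xt n r * A i r * B j r * C k r) ^ 2 := by positivity
  have hβγ : (0:ℝ) ≤ β * (γ + 2) := mul_nonneg hβ (by linarith)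
  rw [le_div_iff₀ hα]
  nlinarith [hopt, hA, h0]
end

section
/- Let A, A' be real I×R matrices and B, C real J×R and K×R matrices, and let M₁ ≥ 0 be a real number such that every column b_r of B and every column c_r of C satisfies ‖b_r‖₂² ≤ M₁ and ‖c_r‖₂² ≤ M₁. Then ‖KR(A,B,C) − KR(A',B,C)‖_F ≤ R · M₁ · ‖A − A'‖_F. -/
open Finset

/-- The Khatri–Rao product of three matrices: the `(I·J·K) × R` matrix whose
entry at row `(i,j,k)` and column `r` is `A i r * B j r * C k r`. -/
def KhatriRao {I J K R : ℕ} (A : Matrix (Fin I) (Fin R) ℝ)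
    (B : Matrix (Fin J) (Fin R) ℝ) (C : Matrix (Fin K) (Fin R) ℝ) :
    Matrix (Fin I × Fin J × Fin K) (Fin R) ℝ :=
  fun p r => A p.1 r * B p.2.1 r * C p.2.2 r

/-- The Frobenius norm of a real matrix. -/
noncomputable def frob {m n : Type*} [Fintype m] [Fintype n]
    (M : Matrix m n ℝ) : ℝ :=
  Real.sqrt (∑ i, ∑ j, (M i j) ^ 2)

/-- The single-factor Lipschitz estimate within the proof of Lemma 3 of the
paper's convergence analysis:
`‖KR(A,B,C) − KR(A',B,C)‖_F ≤ R·M₁·‖A − A'‖_F` when every column of `B` and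
of `C` has squared Euclidean norm at most `M₁`. -/
theorem atd_khatri_rao_single_factor_lipschitz
    {I J K R : ℕ} (A A' : Matrix (Fin I) (Fin R) ℝ)
    (B : Matrix (Fin J) (Fin R) ℝ) (C : Matrix (Fin K) (Fin R) ℝ)
    (M₁ : ℝ) (hM₁ : 0 ≤ M₁)
    (hB : ∀ r, ∑ j, (B j r) ^ 2 ≤ M₁)
    (hC : ∀ r, ∑ k, (C k r) ^ 2 ≤ M₁) :
    frob (KhatriRao A B C - KhatriRao A' B C) ≤ (R : ℝ) * M₁ * frob (A - A') := by
  rcases Nat.eq_zero_or_pos R with hR | hR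
  · subst hR
    simp [frob, KhatriRao]
  set T := ∑ i, ∑ r, ((A - A') i r) ^ 2 with hT
  have hTnonneg : 0 ≤ T := Finset.sum_nonneg fun i _ =>
    Finset.sum_nonneg fun r _ => sq_nonneg _
  have key : ∑ p : Fin I × Fin J × Fin K, ∑ r,
      ((KhatriRao A B C - KhatriRao A' B C) p r) ^ 2 ≤ M₁ ^ 2 * T := by
    have prod_eq : ∀ r, (∑ i, (A i r - A' i r) ^ 2) * (∑ j, (B j r) ^ 2) * (∑ k, (C k r) ^ 2)
        = ∑ i, ∑ j, ∑ k, ((A i r - A' i r) * B j r * C k r) ^ 2 := by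
      intro r
      simp only [mul_pow, Finset.sum_mul, Finset.mul_sum]
      exact Finset.sum_comm.trans
        ((Finset.sum_congr rfl fun j _ => Finset.sum_comm).trans Finset.sum_comm)
    have lhs_eq : ∑ p : Fin I × Fin J × Fin K, ∑ r,
        ((KhatriRao A B C - KhatriRao A' B C) p r) ^ 2
        = ∑ r, (∑ i, (A i r - A' i r) ^ 2) * (∑ j, (B j r) ^ 2) * (∑ k, (C k r) ^ 2) := by
      simp only [prod_eq]
      simp only [Fintype.sum_prod_type, Matrix.sub_apply, KhatriRao, Pi.sub_apply, ← sub_mul]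
      refine Eq.trans ?_ (Finset.sum_comm)
      refine Finset.sum_congr rfl fun i _ => ?_
      refine Eq.trans ?_ (Finset.sum_comm)
      refine Finset.sum_congr rfl fun j _ => Finset.sum_comm
    rw [lhs_eq]
    calc ∑ r, (∑ i, (A i r - A' i r) ^ 2) * (∑ j, (B j r) ^ 2) * (∑ k, (C k r) ^ 2)
        ≤ ∑ r, (∑ i, (A i r - A' i r) ^ 2) * M₁ * M₁ := by
          refine Finset.sum_le_sum fun r _ => ?_
          have hd : 0 ≤ ∑ i, (A i r - A' i r) ^ 2 :=
            Finset.sum_nonneg fun i _ => sq_nonneg _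
          have hb : 0 ≤ ∑ j, (B j r) ^ 2 := Finset.sum_nonneg fun j _ => sq_nonneg _
          have hc : 0 ≤ ∑ k, (C k r) ^ 2 := Finset.sum_nonneg fun k _ => sq_nonneg _
          have h1 : (∑ i, (A i r - A' i r) ^ 2) * (∑ j, (B j r) ^ 2)
              ≤ (∑ i, (A i r - A' i r) ^ 2) * M₁ := by
            exact mul_le_mul_of_nonneg_left (hB r) hd
          exact mul_le_mul h1 (hC r) hc (by positivity)
      _ = M₁ ^ 2 * T := by
          rw [hT]
          rw [Finset.sum_comm]
          simp only [Matrix.sub_apply]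
          rw [← Finset.sum_mul, ← Finset.sum_mul]
          ring
  have h1 : frob (KhatriRao A B C - KhatriRao A' B C) ≤ M₁ * Real.sqrt T := by
    rw [frob]
    calc Real.sqrt (∑ p : Fin I × Fin J × Fin K, ∑ r,
        ((KhatriRao A B C - KhatriRao A' B C) p r) ^ 2)
        ≤ Real.sqrt (M₁ ^ 2 * T) := Real.sqrt_le_sqrt key
      _ = M₁ * Real.sqrt T := by
          rw [Real.sqrt_mul (sq_nonneg _), Real.sqrt_sq hM₁]
  refine h1.trans ?_
  have : frob (A - A') = Real.sqrt T := rfl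
  rw [this]
  have hR1 : (1 : ℝ) ≤ (R : ℝ) := by exact_mod_cast hR
  nlinarith [Real.sqrt_nonneg T, mul_nonneg hM₁ (Real.sqrt_nonneg T)]
end

section
/- Let A, A' be real I×R matrices, B, B' real J×R matrices, and C, C' real K×R matrices, and let M₁ ≥ 0 be a real number such that every column of each of the six matrices A, B, C, A', B', C' has squared Euclidean norm at most M₁. Then ‖KR(A,B,C) − KR(A',B',C')‖_F ≤ 3·R·M₁ · sqrt(‖A − A'‖_F² + ‖B − B'‖_F² + ‖C − C'‖_F²). -/
open Finset

noncomputable def colNorm {m n : Type*} [Fintype m] (M : Matrix m n ℝ) (r : n) : ℝ :=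
  √(∑ i, M i r ^ 2)

section ColNorm

variable {m n : Type*} [Fintype m]

lemma colNorm_nonneg (M : Matrix m n ℝ) (r : n) : 0 ≤ colNorm M r := Real.sqrt_nonneg _

lemma colNorm_eq_norm (M : Matrix m n ℝ) (r : n) :
    colNorm M r = ‖(WithLp.toLp 2 fun i => M i r : EuclideanSpace ℝ m)‖ := by
  simp [colNorm, EuclideanSpace.norm_eq]

lemma colNorm_add_le (M N : Matrix m n ℝ) (r : n) :
    colNorm (M + N) r ≤ colNorm M r + colNorm N r := by
  rw [colNorm_eq_norm, colNorm_eq_norm, colNorm_eq_norm]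
  exact norm_add_le (WithLp.toLp 2 fun i => M i r : EuclideanSpace ℝ m)
    (WithLp.toLp 2 fun i => N i r)

variable [Fintype n]

lemma colNorm_le_frob (M : Matrix m n ℝ) (r : n) : colNorm M r ≤ frob M :=
  Real.sqrt_le_sqrt <| sum_le_sum fun i _ =>
    single_le_sum (f := fun j => M i j ^ 2) (fun _ _ => sq_nonneg _) (mem_univ r)

lemma frob_le_sum_colNorm (M : Matrix m n ℝ) : frob M ≤ ∑ r, colNorm M r := by
  have h : frob M = √(∑ r, colNorm M r ^ 2) := by
    simp only [frob, colNorm, Real.sq_sqrt (sum_nonneg fun _ _ => sq_nonneg _)]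
    rw [sum_comm]
  rw [h, Real.sqrt_le_left (sum_nonneg fun r _ => colNorm_nonneg M r)]
  exact sum_sq_le_sq_sum_of_nonneg fun r _ => colNorm_nonneg M r

end ColNorm

section KhatriRao

variable {I J K R : ℕ}

lemma colNorm_khatriRao (A : Matrix (Fin I) (Fin R) ℝ) (B : Matrix (Fin J) (Fin R) ℝ)
    (C : Matrix (Fin K) (Fin R) ℝ) (r : Fin R) :
    colNorm (KhatriRao A B C) r = colNorm A r * colNorm B r * colNorm C r := by
  have hsum : ∑ p : Fin I × Fin J × Fin K, (KhatriRao A B C p r) ^ 2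
      = (∑ i, A i r ^ 2) * (∑ j, B j r ^ 2) * (∑ k, C k r ^ 2) := by
    rw [mul_assoc, Fintype.sum_mul_sum, Fintype.sum_mul_sum]
    simp only [KhatriRao, mul_pow, mul_assoc, Fintype.sum_prod_type, mul_sum]
  rw [colNorm, hsum, Real.sqrt_mul (by positivity), Real.sqrt_mul (by positivity)]
  rfl

lemma khatriRao_sub_khatriRao (A A' : Matrix (Fin I) (Fin R) ℝ)
    (B B' : Matrix (Fin J) (Fin R) ℝ) (C C' : Matrix (Fin K) (Fin R) ℝ) :
    KhatriRao A B C - KhatriRao A' B' C'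
      = KhatriRao (A - A') B C + KhatriRao A' (B - B') C + KhatriRao A' B' (C - C') := by
  ext p r
  simp only [KhatriRao, Matrix.sub_apply, Matrix.add_apply]
  ring

lemma colNorm_khatriRao_sub_le (A A' : Matrix (Fin I) (Fin R) ℝ)
    (B B' : Matrix (Fin J) (Fin R) ℝ) (C C' : Matrix (Fin K) (Fin R) ℝ) (r : Fin R) :
    colNorm (KhatriRao A B C - KhatriRao A' B' C') r
      ≤ colNorm (A - A') r * colNorm B r * colNorm C r
        + colNorm A' r * colNorm (B - B') r * colNorm C r
        + colNorm A' r * colNorm B' r * colNorm (C - C') r := by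
  rw [khatriRao_sub_khatriRao, ← colNorm_khatriRao, ← colNorm_khatriRao, ← colNorm_khatriRao]
  exact (colNorm_add_le _ _ _).trans (add_le_add_left (colNorm_add_le _ _ _) _)

end KhatriRao

theorem atd_khatri_rao_lipschitz_general
    {I J K R : ℕ} (A A' : Matrix (Fin I) (Fin R) ℝ)
    (B B' : Matrix (Fin J) (Fin R) ℝ) (C C' : Matrix (Fin K) (Fin R) ℝ)
    (M₁ : ℝ) (hM₁ : 0 ≤ M₁)
    (hA' : ∀ r, ∑ i, (A' i r) ^ 2 ≤ M₁)
    (hB : ∀ r, ∑ j, (B j r) ^ 2 ≤ M₁) (hB' : ∀ r, ∑ j, (B' j r) ^ 2 ≤ M₁)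
    (hC : ∀ r, ∑ k, (C k r) ^ 2 ≤ M₁) :
    frob (KhatriRao A B C - KhatriRao A' B' C')
      ≤ 3 * (R : ℝ) * M₁ *
        Real.sqrt (frob (A - A') ^ 2 + frob (B - B') ^ 2 + frob (C - C') ^ 2) := by
  set S := Real.sqrt (frob (A - A') ^ 2 + frob (B - B') ^ 2 + frob (C - C') ^ 2)
  have hsq : 0 ≤ frob (A - A') ^ 2 ∧ 0 ≤ frob (B - B') ^ 2 ∧ 0 ≤ frob (C - C') ^ 2 :=
    ⟨sq_nonneg _, sq_nonneg _, sq_nonneg _⟩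
  have hcol : ∀ r, colNorm (KhatriRao A B C - KhatriRao A' B' C') r ≤ 3 * M₁ * S := by
    intro r
    have hdA : colNorm (A - A') r ≤ S :=
      (colNorm_le_frob _ r).trans (Real.le_sqrt_of_sq_le (by linarith [hsq]))
    have hdB : colNorm (B - B') r ≤ S :=
      (colNorm_le_frob _ r).trans (Real.le_sqrt_of_sq_le (by linarith [hsq]))
    have hdC : colNorm (C - C') r ≤ S :=
      (colNorm_le_frob _ r).trans (Real.le_sqrt_of_sq_le (by linarith [hsq]))
    have hA'r : colNorm A' r ≤ √M₁ := Real.sqrt_le_sqrt (hA' r)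
    have hBr : colNorm B r ≤ √M₁ := Real.sqrt_le_sqrt (hB r)
    have hB'r : colNorm B' r ≤ √M₁ := Real.sqrt_le_sqrt (hB' r)
    have hCr : colNorm C r ≤ √M₁ := Real.sqrt_le_sqrt (hC r)
    calc _ ≤ _ := colNorm_khatriRao_sub_le A A' B B' C C' r
      _ ≤ S * √M₁ * √M₁ + √M₁ * S * √M₁ + √M₁ * √M₁ * S := by
          gcongr <;> exact colNorm_nonneg _ _
      _ = 3 * M₁ * S := by linear_combination 3 * S * Real.mul_self_sqrt hM₁
  calc _ ≤ ∑ r, colNorm (KhatriRao A B C - KhatriRao A' B' C') r := frob_le_sum_colNorm _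
    _ ≤ ∑ _r : Fin R, 3 * M₁ * S := sum_le_sum fun r _ => hcol r
    _ = 3 * R * M₁ * S := by rw [sum_const, card_univ, Fintype.card_fin, nsmul_eq_mul]; ring

/-- Lemma 3 of the paper's convergence analysis (Appendix F): the Khatri–Rao
product is Lipschitz, with constant `C₃ = 3·R·M₁`, in the joint Frobenius norm
of the factor differences. -/
theorem atd_khatri_rao_lipschitz
    {I J K R : ℕ} (A A' : Matrix (Fin I) (Fin R) ℝ)
    (B B' : Matrix (Fin J) (Fin R) ℝ) (C C' : Matrix (Fin K) (Fin R) ℝ)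
    (M₁ : ℝ) (hM₁ : 0 ≤ M₁)
    (hA : ∀ r, ∑ i, (A i r) ^ 2 ≤ M₁) (hA' : ∀ r, ∑ i, (A' i r) ^ 2 ≤ M₁)
    (hB : ∀ r, ∑ j, (B j r) ^ 2 ≤ M₁) (hB' : ∀ r, ∑ j, (B' j r) ^ 2 ≤ M₁)
    (hC : ∀ r, ∑ k, (C k r) ^ 2 ≤ M₁) (hC' : ∀ r, ∑ k, (C' k r) ^ 2 ≤ M₁) :
    frob (KhatriRao A B C - KhatriRao A' B' C')
      ≤ 3 * (R : ℝ) * M₁ *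
        Real.sqrt (frob (A - A') ^ 2 + frob (B - B') ^ 2 + frob (C - C') ^ 2) :=
  atd_khatri_rao_lipschitz_general A A' B B' C C' M₁ hM₁ hA' hB hB' hC
end

section
/- Let A, A' be real I×R matrices, B, B' real J×R matrices, and C, C' real K×R matrices, and let M₁ ≥ 0 be a real number such that every column of each of the six matrices A, B, C, A', B', C' has squared Euclidean norm at most M₁. Set C₃ = 3·R·M₁. Then ‖Π(A,B,C) − Π(A',B',C')‖_F ≤ C₃² · (sqrt(‖A‖_F² + ‖B‖_F² + ‖C‖_F²) + sqrt(‖A'‖_F² + ‖B'‖_F² + ‖C'‖_F²)) · sqrt(‖A − A'‖_F² + ‖B − B'‖_F² + ‖C − C'‖_F²). -/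
set_option maxHeartbeats 1000000


open Finset Matrix

/-- `Π(A,B,C) = KR(A,B,C)ᵀ · KR(A,B,C)`, the `R × R` Gram matrix of the
Khatri–Rao product. -/
def PiKR {I J K R : ℕ} (A : Matrix (Fin I) (Fin R) ℝ)
    (B : Matrix (Fin J) (Fin R) ℝ) (C : Matrix (Fin K) (Fin R) ℝ) :
    Matrix (Fin R) (Fin R) ℝ :=
  (KhatriRao A B C)ᵀ * KhatriRao A B C

lemma frob_nonneg {m n : Type*} [Fintype m] [Fintype n] (M : Matrix m n ℝ) :
    0 ≤ frob M := Real.sqrt_nonneg _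

lemma frob_sq {m n : Type*} [Fintype m] [Fintype n] (M : Matrix m n ℝ) :
    frob M ^ 2 = ∑ i, ∑ j, (M i j) ^ 2 := Real.sq_sqrt (by positivity)

lemma col_le_frob {n R : ℕ} (M : Matrix (Fin n) (Fin R) ℝ) (r : Fin R) :
    Real.sqrt (∑ i, (M i r) ^ 2) ≤ frob M := by
  apply Real.sqrt_le_sqrt
  exact Finset.sum_le_sum fun i _ =>
    Finset.single_le_sum (f := fun j => (M i j) ^ 2) (fun j _ => sq_nonneg _)
      (Finset.mem_univ r)

lemma abs_cs {n : ℕ} (f g : Fin n → ℝ) :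
    |∑ i, f i * g i| ≤ Real.sqrt (∑ i, f i ^ 2) * Real.sqrt (∑ i, g i ^ 2) := by
  rw [← Real.sqrt_sq_eq_abs, ← Real.sqrt_mul (by positivity)]
  exact Real.sqrt_le_sqrt (Finset.sum_mul_sq_le_sq_mul_sq _ _ _)

lemma triple_sum_mul {I J K : ℕ} (f : Fin I → ℝ) (g : Fin J → ℝ) (h : Fin K → ℝ) :
    (∑ i, f i) * (∑ j, g j) * (∑ k, h k) = ∑ i, ∑ j, ∑ k, f i * g j * h k := by
  calc (∑ i, f i) * (∑ j, g j) * (∑ k, h k)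
      = ∑ i, f i * ((∑ j, g j) * (∑ k, h k)) := by rw [mul_assoc, Finset.sum_mul]
    _ = ∑ i, ∑ j, (f i * g j) * (∑ k, h k) := Finset.sum_congr rfl fun i _ => by
        rw [← Finset.sum_mul, ← Finset.mul_sum]; ring
    _ = ∑ i, ∑ j, ∑ k, f i * g j * h k :=
        Finset.sum_congr rfl fun i _ => Finset.sum_congr rfl fun j _ =>
          Finset.mul_sum _ _ _

lemma PiKR_apply {I J K R : ℕ} (A : Matrix (Fin I) (Fin R) ℝ)
    (B : Matrix (Fin J) (Fin R) ℝ) (C : Matrix (Fin K) (Fin R) ℝ) (r s : Fin R) :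
    PiKR A B C r s =
      (∑ i, A i r * A i s) * (∑ j, B j r * B j s) * (∑ k, C k r * C k s) := by
  rw [triple_sum_mul]
  simp only [PiKR, Matrix.mul_apply, Matrix.transpose_apply, KhatriRao,
    Fintype.sum_prod_type]
  refine Finset.sum_congr rfl fun i _ => Finset.sum_congr rfl fun j _ =>
    Finset.sum_congr rfl fun k _ => by ring

/-- Bound on the difference of Gram-type inner products of columns. -/
lemma gram_col_diff {n R : ℕ} (M M' : Matrix (Fin n) (Fin R) ℝ) (S S' D : ℝ)
    (hS : frob M ≤ S) (hS' : frob M' ≤ S') (hD : frob (M - M') ≤ D) (r s : Fin R) :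
    |(∑ i, M i r * M i s) - ∑ i, M' i r * M' i s| ≤ (S + S') * D := by
  have hS0 : 0 ≤ S := (frob_nonneg M).trans hS
  have hS'0 : 0 ≤ S' := (frob_nonneg M').trans hS'
  have hD0 : 0 ≤ D := (frob_nonneg _).trans hD
  have e : (∑ i, M i r * M i s) - ∑ i, M' i r * M' i s =
      (∑ i, (M i r - M' i r) * M i s) + ∑ i, M' i r * (M i s - M' i s) := by
    rw [← Finset.sum_add_distrib, ← Finset.sum_sub_distrib]
    exact Finset.sum_congr rfl fun i _ => by ring
  have c1 : Real.sqrt (∑ i, (M i r - M' i r) ^ 2) ≤ D := by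
    have := col_le_frob (M - M') r
    simp only [Matrix.sub_apply] at this
    exact this.trans hD
  have c2 : Real.sqrt (∑ i, (M i s - M' i s) ^ 2) ≤ D := by
    have := col_le_frob (M - M') s
    simp only [Matrix.sub_apply] at this
    exact this.trans hD
  have n1 : Real.sqrt (∑ i, (M i s) ^ 2) ≤ S := (col_le_frob M s).trans hS
  have n2 : Real.sqrt (∑ i, (M' i r) ^ 2) ≤ S' := (col_le_frob M' r).trans hS'
  rw [e]
  calc |(∑ i, (M i r - M' i r) * M i s) + ∑ i, M' i r * (M i s - M' i s)|
      ≤ |∑ i, (M i r - M' i r) * M i s| + |∑ i, M' i r * (M i s - M' i s)| :=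
        abs_add_le _ _
    _ ≤ Real.sqrt (∑ i, (M i r - M' i r) ^ 2) * Real.sqrt (∑ i, (M i s) ^ 2)
        + Real.sqrt (∑ i, (M' i r) ^ 2) * Real.sqrt (∑ i, (M i s - M' i s) ^ 2) :=
        add_le_add (abs_cs _ _) (abs_cs _ _)
    _ ≤ D * S + S' * D := add_le_add
        (mul_le_mul c1 n1 (Real.sqrt_nonneg _) hD0)
        (mul_le_mul n2 c2 (Real.sqrt_nonneg _) hS'0)
    _ = (S + S') * D := by ring

/-- Cauchy–Schwarz bound with uniform column bound. -/
lemma gram_col_bnd {n R : ℕ} (M : Matrix (Fin n) (Fin R) ℝ) (M₁ : ℝ) (hM₁ : 0 ≤ M₁)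
    (h : ∀ t, ∑ i, (M i t) ^ 2 ≤ M₁) (r s : Fin R) :
    |∑ i, M i r * M i s| ≤ M₁ := by
  calc |∑ i, M i r * M i s|
      ≤ Real.sqrt (∑ i, (M i r) ^ 2) * Real.sqrt (∑ i, (M i s) ^ 2) := abs_cs _ _
    _ ≤ Real.sqrt M₁ * Real.sqrt M₁ :=
        mul_le_mul (Real.sqrt_le_sqrt (h r)) (Real.sqrt_le_sqrt (h s))
          (Real.sqrt_nonneg _) (Real.sqrt_nonneg _)
    _ = M₁ := Real.mul_self_sqrt hM₁


lemma le_sqrt_of_sq_le' {a t : ℝ} (ha : 0 ≤ a) (h : a ^ 2 ≤ t) : a ≤ Real.sqrt t := by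
  rw [← Real.sqrt_sq ha]; exact Real.sqrt_le_sqrt h

/-- Lemma 4 of the paper's convergence analysis (Appendix F): the Gram matrix of
the Khatri–Rao product is Lipschitz in the joint Frobenius norm of the factor
differences, with explicit constant `C₄ = C₃²·(‖(A,B,C)‖_F + ‖(A',B',C')‖_F)`
where `C₃ = 3·R·M₁`. -/
theorem atd_khatri_rao_gram_lipschitz
    {I J K R : ℕ} (A A' : Matrix (Fin I) (Fin R) ℝ)
    (B B' : Matrix (Fin J) (Fin R) ℝ) (C C' : Matrix (Fin K) (Fin R) ℝ)
    (M₁ : ℝ) (hM₁ : 0 ≤ M₁)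
    (hA : ∀ r, ∑ i, (A i r) ^ 2 ≤ M₁) (hA' : ∀ r, ∑ i, (A' i r) ^ 2 ≤ M₁)
    (hB : ∀ r, ∑ j, (B j r) ^ 2 ≤ M₁) (hB' : ∀ r, ∑ j, (B' j r) ^ 2 ≤ M₁)
    (hC : ∀ r, ∑ k, (C k r) ^ 2 ≤ M₁) (hC' : ∀ r, ∑ k, (C' k r) ^ 2 ≤ M₁) :
    frob (PiKR A B C - PiKR A' B' C')
      ≤ (3 * (R : ℝ) * M₁) ^ 2 *
          (Real.sqrt (frob A ^ 2 + frob B ^ 2 + frob C ^ 2)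
            + Real.sqrt (frob A' ^ 2 + frob B' ^ 2 + frob C' ^ 2)) *
          Real.sqrt (frob (A - A') ^ 2 + frob (B - B') ^ 2 + frob (C - C') ^ 2) := by
  set S := Real.sqrt (frob A ^ 2 + frob B ^ 2 + frob C ^ 2) with hSdef
  set S' := Real.sqrt (frob A' ^ 2 + frob B' ^ 2 + frob C' ^ 2) with hS'def
  set D := Real.sqrt (frob (A - A') ^ 2 + frob (B - B') ^ 2 + frob (C - C') ^ 2) with hDdef
  have hS0 : 0 ≤ S := Real.sqrt_nonneg _
  have hS'0 : 0 ≤ S' := Real.sqrt_nonneg _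
  have hD0 : 0 ≤ D := Real.sqrt_nonneg _
  have hfA : frob A ≤ S := le_sqrt_of_sq_le' (frob_nonneg A)
    (by nlinarith [sq_nonneg (frob B), sq_nonneg (frob C)])
  have hfB : frob B ≤ S := le_sqrt_of_sq_le' (frob_nonneg B)
    (by nlinarith [sq_nonneg (frob A), sq_nonneg (frob C)])
  have hfC : frob C ≤ S := le_sqrt_of_sq_le' (frob_nonneg C)
    (by nlinarith [sq_nonneg (frob A), sq_nonneg (frob B)])
  have hfA' : frob A' ≤ S' := le_sqrt_of_sq_le' (frob_nonneg A')
    (by nlinarith [sq_nonneg (frob B'), sq_nonneg (frob C')])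
  have hfB' : frob B' ≤ S' := le_sqrt_of_sq_le' (frob_nonneg B')
    (by nlinarith [sq_nonneg (frob A'), sq_nonneg (frob C')])
  have hfC' : frob C' ≤ S' := le_sqrt_of_sq_le' (frob_nonneg C')
    (by nlinarith [sq_nonneg (frob A'), sq_nonneg (frob B')])
  have hdA : frob (A - A') ≤ D := le_sqrt_of_sq_le' (frob_nonneg _)
    (by nlinarith [sq_nonneg (frob (B - B')), sq_nonneg (frob (C - C'))])
  have hdB : frob (B - B') ≤ D := le_sqrt_of_sq_le' (frob_nonneg _)
    (by nlinarith [sq_nonneg (frob (A - A')), sq_nonneg (frob (C - C'))])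
  have hdC : frob (C - C') ≤ D := le_sqrt_of_sq_le' (frob_nonneg _)
    (by nlinarith [sq_nonneg (frob (A - A')), sq_nonneg (frob (B - B'))])
  set E : ℝ := 3 * M₁ ^ 2 * ((S + S') * D) with hEdef
  have hE0 : 0 ≤ E := by positivity
  -- entrywise bound
  have key : ∀ r s : Fin R, |(PiKR A B C - PiKR A' B' C') r s| ≤ E := by
    intro r s
    rw [Matrix.sub_apply, PiKR_apply, PiKR_apply]
    set x := ∑ i, A i r * A i s
    set y := ∑ j, B j r * B j s
    set z := ∑ k, C k r * C k s
    set x' := ∑ i, A' i r * A' i s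
    set y' := ∑ j, B' j r * B' j s
    set z' := ∑ k, C' k r * C' k s
    have hx : |x - x'| ≤ (S + S') * D := gram_col_diff A A' S S' D hfA hfA' hdA r s
    have hy : |y - y'| ≤ (S + S') * D := gram_col_diff B B' S S' D hfB hfB' hdB r s
    have hz : |z - z'| ≤ (S + S') * D := gram_col_diff C C' S S' D hfC hfC' hdC r s
    have bx' : |x'| ≤ M₁ := gram_col_bnd A' M₁ hM₁ hA' r s
    have by1 : |y| ≤ M₁ := gram_col_bnd B M₁ hM₁ hB r s
    have by' : |y'| ≤ M₁ := gram_col_bnd B' M₁ hM₁ hB' r s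
    have bz : |z| ≤ M₁ := gram_col_bnd C M₁ hM₁ hC r s
    have e : x * y * z - x' * y' * z' =
        (x - x') * y * z + x' * (y - y') * z + x' * y' * (z - z') := by ring
    rw [e]
    calc |(x - x') * y * z + x' * (y - y') * z + x' * y' * (z - z')|
        ≤ |(x - x') * y * z| + |x' * (y - y') * z| + |x' * y' * (z - z')| :=
          abs_add_three _ _ _
      _ = |x - x'| * |y| * |z| + |x'| * |y - y'| * |z| + |x'| * |y'| * |z - z'| := by
          simp [abs_mul]
      _ ≤ ((S + S') * D) * M₁ * M₁ + M₁ * ((S + S') * D) * M₁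
            + M₁ * M₁ * ((S + S') * D) := by
          gcongr <;> positivity
      _ = E := by rw [hEdef]; ring
  -- from entrywise bound to Frobenius bound
  have hfrob : frob (PiKR A B C - PiKR A' B' C') ≤ (R : ℝ) * E := by
    rw [frob]
    have hsum : ∑ r : Fin R, ∑ s : Fin R, ((PiKR A B C - PiKR A' B' C') r s) ^ 2
        ≤ ((R : ℝ) * E) ^ 2 := by
      have : ∑ r : Fin R, ∑ s : Fin R, ((PiKR A B C - PiKR A' B' C') r s) ^ 2
          ≤ ∑ _r : Fin R, ∑ _s : Fin R, E ^ 2 := by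
        refine Finset.sum_le_sum fun r _ => Finset.sum_le_sum fun s _ => ?_
        have h1 := key r s
        have := pow_le_pow_left₀ (abs_nonneg _) h1 2
        rwa [sq_abs] at this
      refine this.trans_eq ?_
      simp [Finset.sum_const, Finset.card_univ]
      ring
    calc Real.sqrt (∑ r, ∑ s, ((PiKR A B C - PiKR A' B' C') r s) ^ 2)
        ≤ Real.sqrt (((R : ℝ) * E) ^ 2) := Real.sqrt_le_sqrt hsum
      _ = (R : ℝ) * E := Real.sqrt_sq (by positivity)
  refine hfrob.trans ?_
  have hRR : (R : ℝ) ≤ 3 * (R : ℝ) ^ 2 := by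
    rcases Nat.eq_zero_or_pos R with h | h
    · simp [h]
    · have : (1 : ℝ) ≤ (R : ℝ) := by exact_mod_cast h
      nlinarith
  calc (R : ℝ) * E = (R : ℝ) * (3 * (M₁ ^ 2 * ((S + S') * D))) := by rw [hEdef]; ring
    _ ≤ (3 * (R : ℝ) ^ 2) * (3 * (M₁ ^ 2 * ((S + S') * D))) := by
        apply mul_le_mul_of_nonneg_right hRR (by positivity)
    _ = (3 * (R : ℝ) * M₁) ^ 2 * (S + S') * D := by ring
end

section
/- Let X and X' be real N×R matrices all of whose rows are nonzero. Then ‖D(X) − D(X')‖_F ≤ ‖X − X'‖_F · ‖D(X)·D(X')‖_F. -/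
open Finset Matrix

/-! Both sides are diagonal, with entries `1/a - 1/b = (b - a)/(ab)` and `1/(ab)` where
`a, b` are the norms of the `n`-th rows of `X, X'`; by the reverse triangle inequality
`|b - a|` is at most the norm of the `n`-th row of `X - X'`, hence at most `‖X - X'‖_F`,
so the estimate holds entrywise and therefore in Frobenius norm. -/

lemma rowNorm_eq_norm {R : ℕ} (v : Fin R → ℝ) : rowNorm v = ‖WithLp.toLp 2 v‖ := by
  simp [rowNorm, EuclideanSpace.norm_eq, Real.norm_eq_abs, sq_abs]

lemma rowNorm_pos {R : ℕ} {v : Fin R → ℝ} (hv : v ≠ 0) : 0 < rowNorm v := by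
  simpa [rowNorm_eq_norm] using hv

lemma abs_rowNorm_sub_rowNorm_le {R : ℕ} (u v : Fin R → ℝ) :
    |rowNorm u - rowNorm v| ≤ rowNorm (u - v) := by
  simpa only [rowNorm_eq_norm, WithLp.toLp_sub] using abs_norm_sub_norm_le _ _

lemma rowNorm_le_frob {m : Type*} [Fintype m] {R : ℕ} (M : Matrix m (Fin R) ℝ) (i : m) :
    rowNorm (M i) ≤ frob M :=
  Real.sqrt_le_sqrt <| single_le_sum (f := fun i => ∑ r, M i r ^ 2)
    (fun _ _ => sum_nonneg fun _ _ => sq_nonneg _) (mem_univ i)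

lemma abs_rowNorm_sub_rowNorm_le_frob {m : Type*} [Fintype m] {R : ℕ}
    (M M' : Matrix m (Fin R) ℝ) (i : m) :
    |rowNorm (M i) - rowNorm (M' i)| ≤ frob (M - M') :=
  (abs_rowNorm_sub_rowNorm_le _ _).trans (rowNorm_le_frob (M - M') i)

lemma frob_le_mul_frob_of_abs_le {m n : Type*} [Fintype m] [Fintype n]
    {M M' : Matrix m n ℝ} {K : ℝ} (hK : 0 ≤ K) (h : ∀ i j, |M i j| ≤ K * |M' i j|) :
    frob M ≤ K * frob M' := by
  have hsq : ∀ i j, M i j ^ 2 ≤ K ^ 2 * M' i j ^ 2 := fun i j => by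
    rw [← sq_abs, ← sq_abs (M' i j), ← mul_pow]
    exact pow_le_pow_left₀ (abs_nonneg _) (h i j) 2
  calc frob M ≤ Real.sqrt (∑ i, ∑ j, K ^ 2 * M' i j ^ 2) :=
        Real.sqrt_le_sqrt <| sum_le_sum fun i _ => sum_le_sum fun j _ => hsq i j
    _ = K * frob M' := by
        simp only [← mul_sum, frob, Real.sqrt_mul (sq_nonneg K), Real.sqrt_sq hK]

lemma abs_inv_sub_inv_le_mul {a b K : ℝ} (ha : 0 < a) (hb : 0 < b) (h : |a - b| ≤ K) :
    |a⁻¹ - b⁻¹| ≤ K * |a⁻¹ * b⁻¹| := by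
  rw [inv_sub_inv ha.ne' hb.ne', abs_div, abs_sub_comm, div_eq_mul_inv, ← mul_inv,
    abs_inv]
  exact mul_le_mul_of_nonneg_right h (by positivity)

lemma Dmat_sub_Dmat {N R : ℕ} (X X' : Matrix (Fin N) (Fin R) ℝ) :
    Dmat X - Dmat X' = diagonal fun n => (rowNorm (X n))⁻¹ - (rowNorm (X' n))⁻¹ :=
  by rw [Dmat, Dmat, diagonal_sub]

lemma Dmat_mul_Dmat {N R : ℕ} (X X' : Matrix (Fin N) (Fin R) ℝ) :
    Dmat X * Dmat X' = diagonal fun n => (rowNorm (X n))⁻¹ * (rowNorm (X' n))⁻¹ :=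
  diagonal_mul_diagonal _ _

/-- The diagonal-rescaling Lipschitz estimate established in the proof of
Lemma 5 of the paper's convergence analysis (Appendix F):
`‖D(X) − D(X')‖_F ≤ ‖X − X'‖_F · ‖D(X)·D(X')‖_F`. -/
theorem atd_diagonal_rescaling_lipschitz
    {N R : ℕ} (X X' : Matrix (Fin N) (Fin R) ℝ)
    (hX : ∀ n, X n ≠ 0) (hX' : ∀ n, X' n ≠ 0) :
    frob (Dmat X - Dmat X') ≤ frob (X - X') * frob (Dmat X * Dmat X') := by
  refine frob_le_mul_frob_of_abs_le (frob_nonneg _) fun i j => ?_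
  rw [Dmat_sub_Dmat, Dmat_mul_Dmat]
  rcases eq_or_ne i j with rfl | hij
  · simp only [diagonal_apply_eq]
    exact abs_inv_sub_inv_le_mul (rowNorm_pos (hX i)) (rowNorm_pos (hX' i))
      (abs_rowNorm_sub_rowNorm_le_frob X X' i)
  · simp [diagonal_apply_ne _ hij]
end

section
/- Let (a_l)_{l≥1} and (b_l)_{l≥1} be sequences of nonnegative real numbers such that the series Σ_{l=1}^∞ a_l diverges (i.e., the sequence of partial sums is unbounded), the series Σ_{l=1}^∞ a_l·b_l converges, and there exists K > 0 such that |b_{l+1} − b_l| ≤ K·a_l for all l ≥ 1. Then the sequence (b_l) converges to 0. -/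
open Finset Filter

/-- Lemma 10 in Appendix F of the paper (Mairal's Lemma A.5): if `(aₗ)` and
`(bₗ)` are nonnegative, `∑ aₗ` diverges, `∑ aₗ·bₗ` converges, and
`|b_{l+1} − bₗ| ≤ K·aₗ`, then `bₗ → 0`. -/
theorem atd_mairal_sequence_lemma
    (a b : ℕ → ℝ) (ha : ∀ l, 0 ≤ a l) (hb : ∀ l, 0 ≤ b l)
    (hdiv : ¬ BddAbove (Set.range fun n => ∑ l ∈ Finset.range n, a l))
    (hconv : Summable fun l => a l * b l)
    (K : ℝ) (hK : 0 < K) (hstep : ∀ l, |b (l + 1) - b l| ≤ K * a l) :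
    Tendsto b atTop (nhds 0) := by
  have tele : ∀ m n, m ≤ n → b m - b n ≤ K * ∑ l ∈ Finset.Ico m n, a l := by
    intro m n hmn
    induction n, hmn using Nat.le_induction with
    | base => simp
    | succ n hmn ih =>
      rw [Finset.sum_Ico_succ_top hmn, mul_add]
      have h1 := (abs_le.mp (hstep n)).1
      linarith
  by_contra hnot
  rw [Metric.tendsto_atTop] at hnot
  push_neg at hnot
  obtain ⟨ε, hε, hfreq⟩ := hnot
  set δ := ε ^ 2 / (4 * K) with hδdef
  have hδ : 0 < δ := by positivity
  have hcs : CauchySeq (fun n => ∑ l ∈ Finset.range n, a l * b l) :=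
    hconv.hasSum.tendsto_sum_nat.cauchySeq
  obtain ⟨N, hN⟩ := Metric.cauchySeq_iff'.mp hcs δ hδ
  obtain ⟨m, hmN, hbm⟩ := hfreq N
  have hbmε : ε ≤ b m := by
    have : dist (b m) 0 = b m := by
      rw [Real.dist_eq, sub_zero, abs_of_nonneg (hb m)]
    linarith [hbm, this ▸ hbm]
  have tail : ∀ n, m ≤ n → ∑ l ∈ Finset.Ico m n, a l * b l < δ := by
    intro n hn
    have h1 := hN n (le_trans hmN hn)
    rw [Real.dist_eq, abs_lt] at h1
    have hsplit : ∑ l ∈ Finset.Ico N n, a l * b l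
        = ∑ l ∈ Finset.range n, a l * b l - ∑ l ∈ Finset.range N, a l * b l := by
      rw [Finset.sum_Ico_eq_sub _ (le_trans hmN hn)]
    have hsub : ∑ l ∈ Finset.Ico m n, a l * b l ≤ ∑ l ∈ Finset.Ico N n, a l * b l := by
      apply Finset.sum_le_sum_of_subset_of_nonneg (Finset.Ico_subset_Ico hmN le_rfl)
      intro i _ _; exact mul_nonneg (ha i) (hb i)
    linarith [h1.2]
  have claim : ∀ n, m ≤ n → ε / 2 ≤ b n := by
    intro n
    induction n using Nat.strong_induction_on with
    | _ n ih =>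
      intro hmn
      by_contra hlt
      push_neg at hlt
      have hIco : ∀ l ∈ Finset.Ico m n, ε / 2 * a l ≤ a l * b l := by
        intro l hl
        rw [Finset.mem_Ico] at hl
        have hbl := ih l hl.2 hl.1
        have := ha l
        nlinarith
      have hdiff : ε / 2 ≤ b m - b n := by linarith
      have hKS : ε / 2 ≤ K * ∑ l ∈ Finset.Ico m n, a l :=
        le_trans hdiff (tele m n hmn)
      have hsum : ε / 2 * ∑ l ∈ Finset.Ico m n, a l ≤ ∑ l ∈ Finset.Ico m n, a l * b l := by
        calc ε / 2 * ∑ l ∈ Finset.Ico m n, a l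
            = ∑ l ∈ Finset.Ico m n, ε / 2 * a l := by rw [Finset.mul_sum]
          _ ≤ _ := Finset.sum_le_sum hIco
      have htail := tail n hmn
      have hδle : δ ≤ ε / 2 * ∑ l ∈ Finset.Ico m n, a l := by
        rw [hδdef]
        rw [div_le_iff₀ (by positivity)]
        nlinarith
      linarith
  -- now partial sums of a are bounded, contradiction
  apply hdiv
  refine ⟨∑ l ∈ Finset.range m, a l + 2 * δ / ε, ?_⟩
  rintro x ⟨n, rfl⟩
  simp only
  rcases le_or_gt n m with hnm | hmn
  · have h1 : ∑ l ∈ Finset.range n, a l ≤ ∑ l ∈ Finset.range m, a l := by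
      apply Finset.sum_le_sum_of_subset_of_nonneg (Finset.range_subset_range.mpr hnm)
      intro i _ _; exact ha i
    have : 0 ≤ 2 * δ / ε := by positivity
    linarith
  · have hmn' := hmn.le
    have hsplit : ∑ l ∈ Finset.range n, a l
        = ∑ l ∈ Finset.range m, a l + ∑ l ∈ Finset.Ico m n, a l := by
      rw [Finset.sum_range_add_sum_Ico _ hmn']
    have hIco : ∀ l ∈ Finset.Ico m n, ε / 2 * a l ≤ a l * b l := by
      intro l hl
      rw [Finset.mem_Ico] at hl
      have hbl := claim l hl.1
      have := ha l
      nlinarith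
    have hsum : ε / 2 * ∑ l ∈ Finset.Ico m n, a l ≤ ∑ l ∈ Finset.Ico m n, a l * b l := by
      calc ε / 2 * ∑ l ∈ Finset.Ico m n, a l
          = ∑ l ∈ Finset.Ico m n, ε / 2 * a l := by rw [Finset.mul_sum]
        _ ≤ _ := Finset.sum_le_sum hIco
    have htail := tail n hmn'
    have : ∑ l ∈ Finset.Ico m n, a l ≤ 2 * δ / ε := by
      rw [le_div_iff₀ hε]
      nlinarith
    linarith
end
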